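/- Let Ω ⊂ ℝ^N be a bounded open set and let W : Ω × Ω × ℝ^d × ℝ^d → ℝ be a normal integrand, bounded from below, such that W(x,y,·,·) is separately level convex for L^N⊗L^N-a.e. (x,y) ∈ Ω × Ω, i.e., for a.e. (x,y), every c ∈ ℝ and every fixed second (resp. first) matrix argument, the sublevel sets are convex. Then the functional G(u) = esssup_{(x,y)∈Ω×Ω} W(x,y,u(x),u(y)) is sequentially weakly* lower semicontinuous on L^∞(Ω;ℝ^d): whenever u_j ⇀* u weakly* in L^∞(Ω;ℝ^d), one has G(u) ≤ liminf_{j→∞} G(u_j). -/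

import Mathlib

/-!
Fix a real `t` above the liminf and pass to a subsequence `v k` with `G (v k) < t`, so that
`W (x, y, v k x, v k y) ≤ t` for all `k` and a.e. `(x, y)`. Testing the weak* convergence against
indicators shows that for a.e. `x` the limit `u₀ x` lies in the closed convex hull of the cluster
points of `(v k x)_k`; only countably many half-spaces have to be tested, which keeps the
exceptional sets null. By Fubini the same holds along index sets selected by another point: for
a.e. `(x, y)` and every cluster point `ξ` of `(v k x)_k`, `u₀ y` lies in the closed convex hull of
the cluster points of `v k y` along the indices where `v k x → ξ`. Lower semicontinuity gives
`W ≤ t` at every such pair of cluster points, and level convexity in the second, then in the first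
variable carries the bound to `(u₀ x, u₀ y)`.
-/

open MeasureTheory Filter Topology Bornology NNReal ENNReal

noncomputable section

/-- `W` is separately level convex: all sublevel sets in each variable separately are convex. -/
def SeparatelyLevelConvex {E F : Type*} [AddCommMonoid E] [Module ℝ E]
    [AddCommMonoid F] [Module ℝ F] (W : E → F → ℝ) : Prop :=
  ∀ c : ℝ, (∀ η, Convex ℝ {ξ | W ξ η ≤ c}) ∧ (∀ ξ, Convex ℝ {η | W ξ η ≤ c})

/-- Weak* convergence `u_j ⇀* u₀` in `L^∞(Ω;ℝ^d)`: the sequence is uniformly bounded and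
converges tested against arbitrary `L¹` functions. -/
def WeakStarConvLinfty {N d : ℕ} (Ω : Set (Fin N → ℝ))
    (u : ℕ → (Fin N → ℝ) → (Fin d → ℝ)) (u₀ : (Fin N → ℝ) → (Fin d → ℝ)) : Prop :=
  (∀ j, Measurable (u j)) ∧ Measurable u₀ ∧
  (∃ C : ℝ, ∀ j, ∀ᵐ x ∂(volume.restrict Ω), ‖u j x‖ ≤ C) ∧
  ∀ h : (Fin N → ℝ) → ℝ, Integrable h (volume.restrict Ω) →
    ∀ i : Fin d, Tendsto (fun j => ∫ x in Ω, h x * u j x i) atTop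
      (𝓝 (∫ x in Ω, h x * u₀ x i))

section

open Set TopologicalSpace

section Separation

variable {E : Type*} [NormedAddCommGroup E] [NormedSpace ℝ E]

theorem isOpen_setOf_strictSeparates {S : Set E} (hS : IsCompact S) (z : E) :
    IsOpen {p : StrongDual ℝ E × ℝ | (∀ ξ ∈ S, p.1 ξ < p.2) ∧ p.2 < p.1 z} := by
  refine IsOpen.inter (isOpen_iff_mem_nhds.2 fun p hp => ?_)
    (isOpen_lt continuous_snd (continuous_fst.clm_apply continuous_const))
  refine hS.eventually_forall_of_forall_eventually fun ξ hξ => ?_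
  exact ContinuousAt.eventually_lt (by fun_prop) (by fun_prop) (hp ξ hξ)

theorem DenseRange.exists_strictSeparates {D : ℕ → StrongDual ℝ E × ℝ} (hD : DenseRange D)
    {S : Set E} (hSc : Convex ℝ S) (hS : IsCompact S) {z : E} (hz : z ∉ S) :
    ∃ m, (∀ ξ ∈ S, (D m).1 ξ < (D m).2) ∧ (D m).2 < (D m).1 z :=
  let ⟨f, r, hfr⟩ := geometric_hahn_banach_closed_point hSc hS.isClosed hz
  hD.exists_mem_open (isOpen_setOf_strictSeparates hS z) ⟨(f, r), hfr⟩

theorem mem_closedConvexHull_setOf_mapClusterPt [FiniteDimensional ℝ E]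
    {D : ℕ → StrongDual ℝ E × ℝ} (hD : DenseRange D) {ι : Type*} {l : Filter ι} {w : ι → E}
    {C : ℝ} (hw : ∀ᶠ k in l, ‖w k‖ ≤ C) {z : E}
    (hz : ∀ m, (D m).2 < (D m).1 z → ∃ᶠ k in l, (D m).2 ≤ (D m).1 (w k)) :
    z ∈ closedConvexHull ℝ {η | MapClusterPt η l w} := by
  set S := closedConvexHull ℝ {η | MapClusterPt η l w}
  have hw' : ∀ᶠ k in l, w k ∈ Metric.closedBall 0 C := by simpa using hw
  have hS_ball : S ⊆ Metric.closedBall 0 C :=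
    closedConvexHull_min (fun η hη => Metric.isClosed_closedBall.mem_of_mapClusterPt hη hw')
      (convex_closedBall 0 C) Metric.isClosed_closedBall
  by_contra hzS
  obtain ⟨m, hS, hz'⟩ := hD.exists_strictSeparates convex_closedConvexHull
    ((isCompact_closedBall 0 C).of_isClosed_subset isClosed_closedConvexHull hS_ball) hzS
  obtain ⟨η, hη, hηw⟩ := ((isCompact_closedBall (0 : E) C).inter_right
    (isClosed_le continuous_const (D m).1.continuous)).exists_mapClusterPt_of_frequently
      ((hz m hz').and_eventually hw' |>.mono fun k hk => ⟨hk.2, hk.1⟩)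
  exact (hS η (subset_closedConvexHull hηw)).not_ge hη.2

end Separation

theorem MapClusterPt.prodMk_of_tendsto {X Y ι : Type*} [TopologicalSpace X] [TopologicalSpace Y]
    {l : Filter ι} {a : ι → X} {b : ι → Y} {ξ : X} {η : Y} (ha : Tendsto a l (𝓝 ξ))
    (hb : MapClusterPt η l b) : MapClusterPt (ξ, η) l fun k => (a k, b k) := by
  rw [mapClusterPt_iff_frequently] at hb ⊢
  intro s hs
  obtain ⟨U, hU, V, hV, hUV⟩ := mem_nhds_prod_iff.1 hs
  exact ((hb V hV).and_eventually (ha hU)).mono fun k hk => hUV ⟨hk.2, hk.1⟩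

theorem SeparatelyLevelConvex.le_of_mem_closedConvexHull {E F ι : Type*}
    [AddCommGroup E] [Module ℝ E] [TopologicalSpace E]
    [AddCommGroup F] [Module ℝ F] [TopologicalSpace F]
    {V : E → F → ℝ} (hV : SeparatelyLevelConvex V)
    (hV_lsc : LowerSemicontinuous fun q : E × F => V q.1 q.2)
    {l : Filter ι} {a : ι → E} {b : ι → F} {t : ℝ} (hab : ∀ᶠ k in l, V (a k) (b k) ≤ t)
    {ξ₀ : E} {η₀ : F} (ha : ξ₀ ∈ closedConvexHull ℝ {ξ | MapClusterPt ξ l a})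
    (hb : ∀ ξ, MapClusterPt ξ l a →
      η₀ ∈ closedConvexHull ℝ {η | MapClusterPt η (l ⊓ comap a (𝓝 ξ)) b}) :
    V ξ₀ η₀ ≤ t := by
  have hclosed : IsClosed {q : E × F | V q.1 q.2 ≤ t} := hV_lsc.isClosed_preimage t
  have hle_η₀ : ∀ ξ, MapClusterPt ξ l a → V ξ η₀ ≤ t := by
    intro ξ hξ
    refine closedConvexHull_min (t := {η | V ξ η ≤ t}) (fun η hη => ?_) ((hV t).2 ξ)
      (hclosed.preimage (Continuous.prodMk_right ξ)) (hb ξ hξ)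
    exact hclosed.mem_of_mapClusterPt
      (MapClusterPt.prodMk_of_tendsto (tendsto_comap.mono_left inf_le_right) hη)
      (hab.filter_mono inf_le_left)
  exact closedConvexHull_min (t := {ξ | V ξ η₀ ≤ t}) hle_η₀ ((hV t).1 η₀)
    (hclosed.preimage (Continuous.prodMk_left η₀)) ha

section WeakStar

variable {α E : Type*} [MeasurableSpace α] [NormedAddCommGroup E] [NormedSpace ℝ E]
  [MeasurableSpace E]

structure WeakStarTendsto (μ : Measure α) (v : ℕ → α → E) (u₀ : α → E) : Prop where
  measurable : ∀ k, Measurable (v k)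
  measurable_limit : Measurable u₀
  exists_bound : ∃ C, ∀ k, ∀ᵐ x ∂μ, ‖v k x‖ ≤ C
  -- on sets where `u₀` is not integrable, `∫ x in s, u₀ x ∂μ` is the junk value `0`
  tendsto_setIntegral : ∀ s, MeasurableSet s → IntegrableOn u₀ s μ →
    Tendsto (fun k => ∫ x in s, v k x ∂μ) atTop (𝓝 (∫ x in s, u₀ x ∂μ))

variable {μ : Measure α} {v : ℕ → α → E} {u₀ : α → E}

theorem WeakStarTendsto.comp {φ : ℕ → ℕ} (hv : WeakStarTendsto μ v u₀)
    (hφ : Tendsto φ atTop atTop) : WeakStarTendsto μ (fun k => v (φ k)) u₀ where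
  measurable k := hv.measurable (φ k)
  measurable_limit := hv.measurable_limit
  exists_bound := let ⟨C, hC⟩ := hv.exists_bound; ⟨C, fun k => hC (φ k)⟩
  tendsto_setIntegral s hs hu₀ := (hv.tendsto_setIntegral s hs hu₀).comp hφ

variable [BorelSpace E] [FiniteDimensional ℝ E] [IsFiniteMeasure μ]

theorem WeakStarTendsto.measure_eq_zero_of_frequently_le (hv : WeakStarTendsto μ v u₀)
    {s : Set α} (hs : MeasurableSet s) {M : ℝ} (hu₀M : ∀ x ∈ s, ‖u₀ x‖ ≤ M)
    (f : StrongDual ℝ E) {r : ℝ} (hlt : ∀ x ∈ s, r < f (u₀ x))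
    (hfreq : ∃ᶠ k in atTop, ∀ x ∈ s, f (v k x) ≤ r) : μ s = 0 := by
  obtain ⟨C, hC⟩ := hv.exists_bound
  have hv_int : ∀ k, IntegrableOn (v k) s μ := fun k =>
    Measure.integrableOn_of_bounded (measure_ne_top μ s) (hv.measurable k).aestronglyMeasurable
      (ae_restrict_of_ae (hC k))
  have hu₀_int : IntegrableOn u₀ s μ :=
    Measure.integrableOn_of_bounded (measure_ne_top μ s) hv.measurable_limit.aestronglyMeasurable
      ((ae_restrict_mem hs).mono hu₀M)
  have hlim : Tendsto (fun k => ∫ x in s, f (v k x) ∂μ) atTop (𝓝 (∫ x in s, f (u₀ x) ∂μ)) := by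
    simp only [f.integral_comp_comm (hv_int _), f.integral_comp_comm hu₀_int]
    exact (f.continuous.tendsto _).comp (hv.tendsto_setIntegral s hs hu₀_int)
  have hupper : ∫ x in s, f (u₀ x) ∂μ ≤ μ.real s * r := by
    refine le_of_tendsto_of_frequently hlim (hfreq.mono fun k hk => ?_)
    calc ∫ x in s, f (v k x) ∂μ ≤ ∫ _ in s, r ∂μ :=
          setIntegral_mono_on (f.integrable_comp (hv_int k))
            (integrableOn_const (measure_ne_top μ s)) hs hk
      _ = μ.real s * r := setIntegral_const r
  by_contra hs0
  have hpos : 0 < ∫ x in s, (f (u₀ x) - r) ∂μ := by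
    refine (setIntegral_pos_iff_support_of_nonneg_ae ?_ ?_).2 ?_
    · exact (ae_restrict_mem hs).mono fun x hx => sub_nonneg.2 (hlt x hx).le
    · exact (f.integrable_comp hu₀_int).sub (integrableOn_const (measure_ne_top μ s))
    · have hsupp : (Function.support fun x => f (u₀ x) - r) ∩ s = s :=
        inter_eq_right.2 fun x hx => sub_ne_zero.2 (hlt x hx).ne'
      rwa [hsupp, pos_iff_ne_zero]
  rw [integral_sub (f.integrable_comp hu₀_int) (integrableOn_const (measure_ne_top μ s)),
    setIntegral_const, smul_eq_mul] at hpos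
  linarith

theorem WeakStarTendsto.ae_frequently_le (hv : WeakStarTendsto μ v u₀) {K : Set ℕ}
    (hK : ∃ᶠ k in atTop, k ∈ K) (f : StrongDual ℝ E) (r : ℝ) :
    ∀ᵐ x ∂μ, r < f (u₀ x) → ∃ᶠ k in atTop, k ∈ K ∧ r ≤ f (v k x) := by
  let s (n M : ℕ) : Set α := {x | r < f (u₀ x) ∧ ‖u₀ x‖ ≤ M ∧ ∀ k ∈ K, n ≤ k → f (v k x) < r}
  have hs_meas : ∀ n M, MeasurableSet (s n M) := by
    intro n M
    have hu₀ := hv.measurable_limit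
    have hv' := hv.measurable
    simp only [s, measurableSet_setOfPred]
    measurability
  have hs_null : ∀ n M, μ (s n M) = 0 := fun n M =>
    hv.measure_eq_zero_of_frequently_le (hs_meas n M) (fun x hx => hx.2.1) f (fun x hx => hx.1)
      ((hK.and_eventually (eventually_ge_atTop n)).mono fun k hk x hx => (hx.2.2 k hk.1 hk.2).le)
  filter_upwards [ae_all_iff.2 fun n => ae_all_iff.2 fun M =>
    measure_eq_zero_iff_ae_notMem.1 (hs_null n M)] with x hx hrx
  by_contra h
  obtain ⟨n, hn⟩ := eventually_atTop.1 (not_frequently.1 h)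
  obtain ⟨M, hM⟩ := exists_nat_ge ‖u₀ x‖
  exact hx n M ⟨hrx, hM, fun k hk hnk => not_le.1 fun hrk => hn k hnk ⟨hk, hrk⟩⟩

theorem WeakStarTendsto.ae_mem_closedConvexHull (hv : WeakStarTendsto μ v u₀) :
    ∀ᵐ x ∂μ, u₀ x ∈ closedConvexHull ℝ {ξ | MapClusterPt ξ atTop fun k => v k x} := by
  obtain ⟨C, hC⟩ := hv.exists_bound
  let D := denseSeq (StrongDual ℝ E × ℝ)
  filter_upwards [ae_all_iff.2 hC, ae_all_iff.2 fun m =>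
    hv.ae_frequently_le (K := univ) (Frequently.of_forall fun k => mem_univ k) (D m).1 (D m).2]
    with x hCx hx
  exact mem_closedConvexHull_setOf_mapClusterPt (denseRange_denseSeq _)
    (Eventually.of_forall hCx) fun m hm => (hx m hm).mono fun k hk => hk.2

end WeakStar

theorem TopologicalSpace.IsTopologicalBasis.frequently_inf_comap_nhds {X ι : Type*}
    [TopologicalSpace X] {B : Set (Set X)} (hB : IsTopologicalBasis B) {l : Filter ι}
    {a : ι → X} {ξ : X} {P : ι → Prop} (h : ∀ U ∈ B, ξ ∈ U → ∃ᶠ k in l, a k ∈ U ∧ P k) :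
    ∃ᶠ k in l ⊓ comap a (𝓝 ξ), P k := by
  refine (l.basis_sets.inf (hB.nhds_hasBasis.comap a)).frequently_iff.2 ?_
  rintro ⟨s, U⟩ ⟨hs, hU, hξU⟩
  obtain ⟨k, hk, hks⟩ := ((h U hU hξU).and_eventually hs).exists
  exact ⟨k, ⟨hks, hk.1⟩, hk.2⟩

section Product

variable {α β E F : Type*} [MeasurableSpace α] [MeasurableSpace β]
  [NormedAddCommGroup E] [NormedSpace ℝ E] [FiniteDimensional ℝ E]
  [MeasurableSpace E] [BorelSpace E]
  [NormedAddCommGroup F] [NormedSpace ℝ F] [FiniteDimensional ℝ F]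
  [MeasurableSpace F] [BorelSpace F]
  {μ : Measure α} {ν : Measure β} [IsFiniteMeasure ν]

theorem WeakStarTendsto.ae_prod_mem_closedConvexHull {v : ℕ → α → E} (hv : ∀ k, Measurable (v k))
    {w : ℕ → β → F} {w₀ : β → F} (hw : WeakStarTendsto ν w w₀) :
    ∀ᵐ p ∂μ.prod ν, ∀ ξ, MapClusterPt ξ atTop (fun k => v k p.1) →
      w₀ p.2 ∈ closedConvexHull ℝ
        {η | MapClusterPt η (atTop ⊓ comap (fun k => v k p.1) (𝓝 ξ)) fun k => w k p.2} := by
  let D := denseSeq (StrongDual ℝ F × ℝ)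
  have : Countable (countableBasis E) := (countable_countableBasis E).to_subtype
  have hgood : ∀ᵐ p ∂μ.prod ν, ∀ U : countableBasis E, ∀ m,
      (∃ᶠ k in atTop, v k p.1 ∈ (U : Set E)) → (D m).2 < (D m).1 (w₀ p.2) →
        ∃ᶠ k in atTop, v k p.1 ∈ (U : Set E) ∧ (D m).2 ≤ (D m).1 (w k p.2) := by
    rw [Measure.ae_prod_iff_ae_ae]
    · -- for fixed `x` the index set `{k | v k x ∈ U}` is fixed
      refine ae_of_all _ fun x => ae_all_iff.2 fun U => ae_all_iff.2 fun m => ?_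
      by_cases hU : ∃ᶠ k in atTop, v k x ∈ (U : Set E)
      · exact (hw.ae_frequently_le hU (D m).1 (D m).2).mono fun y hy _ => hy
      · exact ae_of_all _ fun y hU' => absurd hU' hU
    · have hmem : ∀ (U : countableBasis E) k, Measurable fun p : α × β => v k p.1 ∈ (U : Set E) :=
        fun U k => (measurable_mem.2 (isOpen_of_mem_countableBasis U.2).measurableSet).comp
          ((hv k).comp measurable_fst)
      have hw₀ := hw.measurable_limit
      have hw' := hw.measurable
      simp only [frequently_atTop, measurableSet_setOfPred]
      refine Measurable.forall fun U => Measurable.forall fun m => ?_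
      measurability
  obtain ⟨C, hC⟩ := hw.exists_bound
  filter_upwards [hgood, Measure.quasiMeasurePreserving_snd.ae (ae_all_iff.2 hC)]
    with p hp hCp ξ hξ
  refine mem_closedConvexHull_setOf_mapClusterPt (denseRange_denseSeq _)
    ((Eventually.of_forall hCp).filter_mono inf_le_left) fun m hm => ?_
  exact (isBasis_countableBasis E).frequently_inf_comap_nhds fun U hU hξU =>
    hp ⟨U, hU⟩ m (hξ.frequently ((isOpen_of_mem_countableBasis hU).mem_nhds hξU)) hm

end Product

theorem WeakStarConvLinfty.weakStarTendsto {N d : ℕ} {Ω : Set (Fin N → ℝ)}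
    [IsFiniteMeasure (volume.restrict Ω)] {u : ℕ → (Fin N → ℝ) → (Fin d → ℝ)}
    {u₀ : (Fin N → ℝ) → (Fin d → ℝ)} (h : WeakStarConvLinfty Ω u u₀) :
    WeakStarTendsto (volume.restrict Ω) u u₀ := by
  obtain ⟨hu, hu₀, ⟨C, hC⟩, htest⟩ := h
  refine ⟨hu, hu₀, ⟨C, hC⟩, fun s hs hu₀s => tendsto_pi_nhds.2 fun i => ?_⟩
  have hcoord : ∀ w : (Fin N → ℝ) → Fin d → ℝ, IntegrableOn w s (volume.restrict Ω) →
      (∫ x in s, w x ∂(volume.restrict Ω)) i =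
        ∫ x in Ω, s.indicator 1 x * w x i := by
    intro w hw
    have hproj :=
      (ContinuousLinearMap.proj (R := ℝ) (φ := fun _ : Fin d => ℝ) i).integral_comp_comm hw
    simp only [ContinuousLinearMap.proj_apply] at hproj
    rw [← hproj, ← integral_indicator hs]
    congr 1 with x
    by_cases hx : x ∈ s <;> simp [hx]
  have hu_int : ∀ k, IntegrableOn (u k) s (volume.restrict Ω) := fun k =>
    Measure.integrableOn_of_bounded (measure_ne_top _ s) (hu k).aestronglyMeasurable
      (ae_restrict_of_ae (hC k))
  simp only [hcoord _ (hu_int _), hcoord _ hu₀s]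
  exact htest _ ((integrable_const 1).indicator hs) i

end

theorem lsc_nonlocal_supremal_Linfty_general {N d : ℕ}
    (Ω : Set (Fin N → ℝ)) (hΩb : IsBounded Ω)
    (W : (Fin N → ℝ) → (Fin N → ℝ) → (Fin d → ℝ) → (Fin d → ℝ) → ℝ)
    (hWlsc : ∀ᵐ p ∂((volume.restrict Ω).prod (volume.restrict Ω)),
      LowerSemicontinuous fun q : (Fin d → ℝ) × (Fin d → ℝ) => W p.1 p.2 q.1 q.2)
    (hWlc : ∀ᵐ p ∂((volume.restrict Ω).prod (volume.restrict Ω)),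
      SeparatelyLevelConvex (W p.1 p.2))
    (G : ((Fin N → ℝ) → (Fin d → ℝ)) → EReal)
    (hG : ∀ u, G u = essSup (fun p : (Fin N → ℝ) × (Fin N → ℝ) =>
        (W p.1 p.2 (u p.1) (u p.2) : EReal))
      ((volume.restrict Ω).prod (volume.restrict Ω)))
    (u : ℕ → (Fin N → ℝ) → (Fin d → ℝ)) (u₀ : (Fin N → ℝ) → (Fin d → ℝ))
    (hconv : WeakStarConvLinfty Ω u u₀) :
    G u₀ ≤ liminf (fun j => G (u j)) atTop := by
  have : IsFiniteMeasure (volume.restrict Ω) := isFiniteMeasure_restrict.2 hΩb.measure_lt_top.ne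
  suffices h : ∀ t : ℝ, liminf (fun j => G (u j)) atTop < t → G u₀ ≤ t by
    by_contra! hlt
    obtain ⟨t, hlim, ht⟩ := EReal.exists_between_coe_real hlt
    exact (h t hlim).not_gt ht
  intro t ht
  obtain ⟨φ, hφ, hGφ⟩ :=
    extraction_of_frequently_atTop (frequently_lt_of_liminf_lt (by isBoundedDefault) ht)
  have hv := hconv.weakStarTendsto.comp hφ.tendsto_atTop
  have hWv : ∀ᵐ p ∂(volume.restrict Ω).prod (volume.restrict Ω),
      ∀ k, W p.1 p.2 (u (φ k) p.1) (u (φ k) p.2) ≤ t := by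
    refine ae_all_iff.2 fun k =>
      (ae_lt_of_essSup_lt ?_).mono fun p hp => EReal.coe_le_coe_iff.1 hp.le
    rw [← hG]
    exact hGφ k
  rw [hG]
  refine essSup_le_of_ae_le _ ?_
  filter_upwards [hWlsc, hWlc, hWv,
    Measure.quasiMeasurePreserving_fst.ae hv.ae_mem_closedConvexHull,
    hv.ae_prod_mem_closedConvexHull hv.measurable] with p hp_lsc hp_lc hp_le hp_fst hp_snd
  exact EReal.coe_le_coe_iff.2
    (hp_lc.le_of_mem_closedConvexHull hp_lsc (Eventually.of_forall hp_le) hp_fst hp_snd)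

/-- **Lower semicontinuity of nonlocal supremal functionals on `L^∞` under separate level
convexity.**  Let `Ω ⊂ ℝ^N` be a bounded open set and `W : Ω × Ω × ℝ^d × ℝ^d → ℝ` a normal
integrand, bounded from below, with `W(x,y,·,·)` separately level convex for a.e. `(x,y)`.
Then `G(u) = esssup_{(x,y) ∈ Ω×Ω} W(x,y,u(x),u(y))` is sequentially weakly* lower
semicontinuous on `L^∞(Ω;ℝ^d)`. -/
theorem lsc_nonlocal_supremal_Linfty {N d : ℕ}
    (Ω : Set (Fin N → ℝ)) (hΩo : IsOpen Ω) (hΩb : IsBounded Ω)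
    (W : (Fin N → ℝ) → (Fin N → ℝ) → (Fin d → ℝ) → (Fin d → ℝ) → ℝ)
    (hWmeas : Measurable fun p : ((Fin N → ℝ) × (Fin N → ℝ)) × (Fin d → ℝ) × (Fin d → ℝ) =>
      W p.1.1 p.1.2 p.2.1 p.2.2)
    (hWlsc : ∀ᵐ p ∂((volume.restrict Ω).prod (volume.restrict Ω)),
      LowerSemicontinuous fun q : (Fin d → ℝ) × (Fin d → ℝ) => W p.1 p.2 q.1 q.2)
    (hWbdd : ∃ c : ℝ, ∀ x y ξ η, c ≤ W x y ξ η)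
    (hWlc : ∀ᵐ p ∂((volume.restrict Ω).prod (volume.restrict Ω)),
      SeparatelyLevelConvex (W p.1 p.2))
    (G : ((Fin N → ℝ) → (Fin d → ℝ)) → EReal)
    (hG : ∀ u, G u = essSup (fun p : (Fin N → ℝ) × (Fin N → ℝ) =>
        (W p.1 p.2 (u p.1) (u p.2) : EReal))
      ((volume.restrict Ω).prod (volume.restrict Ω)))
    (u : ℕ → (Fin N → ℝ) → (Fin d → ℝ)) (u₀ : (Fin N → ℝ) → (Fin d → ℝ))
    (hconv : WeakStarConvLinfty Ω u u₀) :
    G u₀ ≤ liminf (fun j => G (u j)) atTop :=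
  lsc_nonlocal_supremal_Linfty_general Ω hΩb W hWlsc hWlc G hG u u₀ hconv
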